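/- Let n ≥ 1 and let r ≡ 2 (mod 4), r ≥ 2. The kernel of the epimorphism p : A_{r,n} → G_{r/2,n} has exactly 2^{n−1} elements. -/

import Mathlib

open Multiplicative

namespace ACP

/-- The action of `Sₙ` on color vectors by permuting coordinates. -/
def permAct (r n : ℕ) : Equiv.Perm (Fin n) →* MulAut (Fin n → Multiplicative (ZMod r)) where
  toFun τ :=
    { toFun := fun z => z ∘ τ.symm
      invFun := fun z => z ∘ τ
      left_inv := fun z => by ext i; simp
      right_inv := fun z => by ext i; simp
      map_mul' := fun z w => rfl }
  map_one' := by ext z i; rfl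
  map_mul' a b := by ext z i; rfl

/-- The group of colored permutations `G_{r,n} = ℤ_r ≀ Sₙ`. -/
abbrev G (r n : ℕ) : Type := (Fin n → Multiplicative (ZMod r)) ⋊[permAct r n] Equiv.Perm (Fin n)

/-- The Coxeter-like generators: `gen r n 0 = s₀` colors the digit 1 by one color,
`gen r n i = sᵢ` (for `1 ≤ i ≤ n-1`) is the adjacent transposition `(i, i+1)`. -/
def gen (r n : ℕ) (i : ℕ) : G r n :=
  if h : 0 < i ∧ i < n then
    ⟨1, Equiv.swap ⟨i - 1, by omega⟩ ⟨i, h.2⟩⟩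
  else
    ⟨fun j => if (j : ℕ) = 0 then ofAdd (1 : ZMod r) else 1, 1⟩

def zmod2ToUnits : Multiplicative (ZMod 2) →* ℤˣ where
  toFun z := (-1) ^ (toAdd z).val
  map_one' := rfl
  map_mul' := by decide

def csumHom (r n : ℕ) (hr : 2 ∣ r) :
    (Fin n → Multiplicative (ZMod r)) →* Multiplicative (ZMod 2) where
  toFun z := ofAdd (∑ i, ZMod.castHom hr (ZMod 2) (toAdd (z i)))
  map_one' := by simp
  map_mul' z w := by
    have h : ∀ i, ZMod.castHom hr (ZMod 2) (toAdd ((z * w) i))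
        = ZMod.castHom hr (ZMod 2) (toAdd (z i)) + ZMod.castHom hr (ZMod 2) (toAdd (w i)) :=
      fun i => map_add _ _ _
    simp only [h, Finset.sum_add_distrib, ofAdd_add]

/-- The sign character of `G_{r,n}` (for even `r`): sends every Coxeter-like
generator `sᵢ` to `-1`. -/
noncomputable def sgn (r n : ℕ) (hr : 2 ∣ r) : G r n →* ℤˣ :=
  SemidirectProduct.lift (zmod2ToUnits.comp (csumHom r n hr)) Equiv.Perm.sign
    (by
      intro g
      refine MonoidHom.ext fun z => ?_
      have h1 : ∀ a x : ℤˣ, a * x * a⁻¹ = x := fun a x => by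
        rw [mul_comm a x, mul_inv_cancel_right]
      simp only [MonoidHom.comp_apply, MulEquiv.coe_toMonoidHom, MulAut.conj_apply, h1]
      congr 1
      show csumHom r n hr (z ∘ g.symm) = csumHom r n hr z
      unfold csumHom
      simp only [MonoidHom.coe_mk, OneHom.coe_mk]
      congr 1
      exact Equiv.sum_comp g.symm fun j => ZMod.castHom hr (ZMod 2) (toAdd (z j)))

/-- The group of alternating colored permutations `A_{r,n}`: the kernel of the sign
character of `G_{r,n}`. -/
noncomputable def Arn (r n : ℕ) (hr : 2 ∣ r) : Subgroup (G r n) := (sgn r n hr).ker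

/-- The generators of `A_{r,n}`: `agen r n 0 = a₀ = s₀²` and
`agen r n i = aᵢ = s₀^{r/2} sᵢ` for `i ≥ 1`. -/
def agen (r n : ℕ) (i : ℕ) : G r n :=
  if i = 0 then gen r n 0 ^ 2 else gen r n 0 ^ (r / 2) * gen r n i

/-- The generating set `𝒜 = {a₀, a₁, a₁⁻¹, a₂, …, a_{n-1}}` of `A_{r,n}`. -/
def Aset (r n : ℕ) : Set (G r n) :=
  {x | ∃ i ≤ n - 1, x = agen r n i} ∪ {(agen r n 1)⁻¹}

/-- The Coxeter-like generating set `{s₀, …, s_{n-1}}` of `G_{r,n}`. -/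
def Sset (r n : ℕ) : Set (G r n) := {x | ∃ i < n, x = gen r n i}

/-- Word length of `g` with respect to a generating set `B`. -/
noncomputable def wordLength {H : Type*} [Group H] (B : Set H) (g : H) : ℕ :=
  sInf {k | ∃ w : List H, (∀ x ∈ w, x ∈ B) ∧ w.prod = g ∧ w.length = k}

/-- The element `a₁² ∈ A_{r,n}`. -/
noncomputable def a1sq (r n : ℕ) (hr : 2 ∣ r) : ↥(Arn r n hr) :=
  ⟨agen r n 1 ^ 2, by rw [Arn, MonoidHom.mem_ker, map_pow]; exact Int.units_sq _⟩

/-- The operator `a ⊘ 2` : the residue mod `r/2` of `a/2` (`a` even) or of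
`(a + r/2)/2` (`a` odd). -/
def oslash (r a : ℕ) : ℕ :=
  if a % 2 = 0 then (a / 2) % (r / 2) else ((a + r / 2) / 2) % (r / 2)

/-- `z_i(π)`, the color of digit `i+1` of `π`, as a natural number in `{0, …, r-1}`. -/
def zval (r n : ℕ) (π : G r n) (i : Fin n) : ℕ := (toAdd (π.left i)).val

/-- `csum(π) = Σ z_i(π)`. -/
def csum (r n : ℕ) (π : G r n) : ℕ := ∑ i, zval r n π i

/-- Rank of the colored letter `b^{[c]}` (with `1 ≤ b ≤ n`, `0 ≤ c ≤ r-1`) in the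
length order `n^{[r-1]} < ⋯ < 1^{[1]} < 1 < 2 < ⋯ < n`. -/
def rank (r n : ℕ) (b c : ℕ) : ℕ :=
  if c = 0 then n * (r - 1) + (b - 1) else (n - b) * (r - 1) + (r - 1 - c)

/-- Rank (in the length order) of the letter in position `i` of the window of `π`. -/
def colRank (r n : ℕ) (π : G r n) (i : Fin n) : ℕ :=
  rank r n ((π.right i : ℕ) + 1) (zval r n π (π.right i))

/-- The inversion number of `π ∈ G_{r,n}` with respect to the length order. -/
noncomputable def inv (r n : ℕ) (π : G r n) : ℕ :=
  Nat.card {p : Fin n × Fin n // p.1 < p.2 ∧ colRank r n π p.2 < colRank r n π p.1}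

/-- The ordinary inversion number of a permutation. -/
noncomputable def invPerm (n : ℕ) (τ : Equiv.Perm (Fin n)) : ℕ :=
  Nat.card {p : Fin n × Fin n // p.1 < p.2 ∧ τ p.2 < τ p.1}

/-- The covering map `p : A_{r,n} → G_{r/2,n}`, `p(z, τ) = ((zᵢ ⊘ 2)ᵢ, τ)`. -/
def pmap (r n : ℕ) (π : G r n) : G (r / 2) n :=
  ⟨fun i => ofAdd ((oslash r (zval r n π i) : ZMod (r / 2))), π.right⟩

/-- The section `s : G_{r/2,n} → A_{r,n}`: doubles all colors (mod `r`), adding `r/2`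
to the color of the digit `1` when `inv(|π|)` is odd. -/
noncomputable def smap (r n : ℕ) (π : G (r / 2) n) : G r n :=
  ⟨fun d => ofAdd
      (((2 * zval (r / 2) n π d +
        if (d : ℕ) = 0 ∧ invPerm n π.right % 2 = 1 then r / 2 else 0 : ℕ) : ZMod r)),
   π.right⟩

/-- `c(π) = Σ_{i : z_i(π) ≠ 0} (i - 1)` (digits are `1`-based). -/
def cstat (r n : ℕ) (π : G r n) : ℕ :=
  ∑ i : Fin n, if zval r n π i ≠ 0 then (i : ℕ) else 0

/-- The number of absolute transparent inversions of `π`. -/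
noncomputable def tinv (r n : ℕ) (π : G r n) : ℕ :=
  Nat.card {p : Fin n × Fin n //
    zval r n π p.1 = r / 2 ∧ p.2 < p.1 ∧ π.right⁻¹ p.1 < π.right⁻¹ p.2}

/-- The (digit-indexed) Lehmer code `l_i = #{j : j > i, τ⁻¹(i) > τ⁻¹(j)}`. -/
noncomputable def lehmer (n : ℕ) (τ : Equiv.Perm (Fin n)) (i : Fin n) : ℕ :=
  Nat.card {j : Fin n // i < j ∧ τ⁻¹ j < τ⁻¹ i}


/-- `μ(π)`: the minimum of `β(ω) + n(ω)` over all factorizations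
`ω = b₀ s₀^{i₁} b₁ ⋯ s₀^{i_{k+1}} b_{k+1}` of `π`, where each `b_u` is a word in
`s₁, …, s_{n-1}` only, `n(ω)` is the number of letters `sᵢ` with `i ≠ 0`, and
`β(ω) = Σ_u (i_u ⊘ 2)`. -/
noncomputable def mu (r n : ℕ) (π : G r n) : ℕ :=
  sInf {m | ∃ (b₀ : List ℕ) (L : List (ℕ × List ℕ)),
    (∀ x ∈ b₀, 1 ≤ x ∧ x ≤ n - 1) ∧
    (∀ q ∈ L, ∀ x ∈ q.2, 1 ≤ x ∧ x ≤ n - 1) ∧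
    π = (b₀.map (gen r n)).prod *
        (L.map (fun q => gen r n 0 ^ q.1 * (q.2.map (gen r n)).prod)).prod ∧
    m = (L.map (fun q => oslash r q.1)).sum +
        (b₀.length + (L.map (fun q => q.2.length)).sum)}

/-- The flag-inversion number on `A_{r,n}`:
`finv_A(π) = (r/2)·inv(|π|) + Σᵢ (cᵢ(π) ⊘ 2)` where `cᵢ(π) = r - zᵢ(π⁻¹) (mod r)`. -/
noncomputable def finvA (r n : ℕ) (π : G r n) : ℕ :=
  (r / 2) * invPerm n π.right + ∑ i, oslash r ((r - zval r n π⁻¹ i) % r)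

/-- The number of (colored) right-to-left minima of `π` whose color is not in `{0, r/2}`. -/
noncomputable def rtlMinA (r n : ℕ) (π : G r n) : ℕ :=
  Nat.card {i : Fin n // (∀ j : Fin n, i < j → π.right i < π.right j) ∧
    zval r n π (π.right i) ≠ 0 ∧ zval r n π (π.right i) ≠ r / 2}

/-- The defining relators of the Coxeter-like presentation of `A_{r,n}` on generators
`x₀, …, x_{n-1}`. -/
def rels (r n : ℕ) : Set (FreeGroup (Fin n)) :=
  {w | ∃ i : Fin n, (i : ℕ) = 0 ∧ w = FreeGroup.of i ^ (r / 2)} ∪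
  {w | ∃ i : Fin n, (i : ℕ) = 1 ∧ w = FreeGroup.of i ^ 4} ∪
  {w | ∃ i : Fin n, 2 ≤ (i : ℕ) ∧ w = FreeGroup.of i ^ 2} ∪
  {w | ∃ i j : Fin n, (i : ℕ) ≠ 1 ∧ (j : ℕ) ≠ 1 ∧ (i : ℕ) + 1 < (j : ℕ) ∧
    w = FreeGroup.of i * FreeGroup.of j * (FreeGroup.of i)⁻¹ * (FreeGroup.of j)⁻¹} ∪
  {w | ∃ i j : Fin n, 1 ≤ (i : ℕ) ∧ (j : ℕ) = (i : ℕ) + 1 ∧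
    w = (FreeGroup.of i * FreeGroup.of j) ^ 3} ∪
  {w | ∃ i j : Fin n, (i : ℕ) = 0 ∧ (j : ℕ) = 1 ∧
    w = (FreeGroup.of i * FreeGroup.of j) ^ (2 * r)} ∪
  {w | ∃ i j : Fin n, (i : ℕ) = 0 ∧ (j : ℕ) = 1 ∧
    w = (FreeGroup.of i * (FreeGroup.of j)⁻¹) ^ (2 * r)} ∪
  {w | ∃ i j : Fin n, (i : ℕ) = 0 ∧ (j : ℕ) = 1 ∧
    w = FreeGroup.of i * FreeGroup.of j ^ 2 * (FreeGroup.of i)⁻¹ * (FreeGroup.of j ^ 2)⁻¹} ∪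
  {w | ∃ i j : Fin n, (i : ℕ) = 1 ∧ 2 < (j : ℕ) ∧
    w = FreeGroup.of i * FreeGroup.of j * FreeGroup.of i * (FreeGroup.of j)⁻¹}

end ACP


/-!
An element of `A_{r,n}` is killed by `p` iff its permutation is trivial and each colour `z` has
`z ⊘ 2 = 0`; since `r ≡ 2 (mod 4)`, this means `z ∈ {0, r/2}` (for odd `z` it forces
`z + r/2 = r`). As `r/2` is odd, the sign of such an element is `(-1)` to the number of colours
equal to `r/2`. So the kernel is in bijection, via colour parities, with the vectors in
`(ℤ/2)ⁿ` of coordinate sum zero, and there are `2^{n-1}` of those.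
-/

theorem Fin.natCard_sum_eq_zero (A : Type*) [AddCommGroup A] (m : ℕ) :
    Nat.card {v : Fin (m + 1) → A // ∑ i, v i = 0} = Nat.card A ^ m := by
  let e : {v : Fin (m + 1) → A // ∑ i, v i = 0} ≃ (Fin m → A) :=
    { toFun := fun v => Fin.tail v.1
      invFun := fun w => ⟨Fin.cons (-∑ i, w i) w, by simp [Fin.sum_univ_succ]⟩
      left_inv := fun ⟨v, hv⟩ => by
        rw [Fin.sum_univ_succ] at hv
        ext i
        refine Fin.cases ?_ (fun _ => rfl) i
        exact (eq_neg_of_add_eq_zero_left hv).symm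
      right_inv := fun _ => rfl }
  rw [Nat.card_congr e, Nat.card_fun, Nat.card_fin]

namespace ACP

open Multiplicative

variable {r n : ℕ}

theorem oslash_lt (hr : 2 ≤ r) (a : ℕ) : oslash r a < r / 2 := by
  unfold oslash
  split <;> exact Nat.mod_lt _ (by omega)

theorem oslash_eq_zero_iff (hr : r % 4 = 2) {a : ℕ} (ha : a < r) :
    oslash r a = 0 ↔ a = 0 ∨ a = r / 2 := by
  unfold oslash
  split
  · rw [Nat.mod_eq_of_lt (by omega)]; omega
  · by_cases hlt : (a + r / 2) / 2 < r / 2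
    · rw [Nat.mod_eq_of_lt hlt]; omega
    · rw [Nat.mod_eq_sub_mod (le_of_not_gt hlt), Nat.mod_eq_of_lt (by omega)]; omega

theorem ofAdd_zval [NeZero r] (x : G r n) (i : Fin n) :
    ofAdd (zval r n x i : ZMod r) = x.left i :=
  congrArg ofAdd (ZMod.natCast_zmod_val _)

theorem pmap_eq_one_iff (hr : r % 4 = 2) (x : G r n) :
    pmap r n x = 1 ↔ x.right = 1 ∧ ∀ i, zval r n x i = 0 ∨ zval r n x i = r / 2 := by
  have : NeZero r := ⟨by omega⟩
  have hcolor (i : Fin n) : (oslash r (zval r n x i) : ZMod (r / 2)) = 0 ↔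
      zval r n x i = 0 ∨ zval r n x i = r / 2 := by
    have hz : zval r n x i < r := ZMod.val_lt _
    rw [ZMod.natCast_eq_zero_iff, ← oslash_eq_zero_iff hr hz]
    exact ⟨fun h => Nat.eq_zero_of_dvd_of_lt h (oslash_lt (by omega) _),
      fun h => h ▸ dvd_zero _⟩
  rw [SemidirectProduct.ext_iff, funext_iff, and_comm]
  exact and_congr Iff.rfl (forall_congr' fun i => (ofAdd_eq_one).trans (hcolor i))

theorem sgn_apply (hr : 2 ∣ r) (x : G r n) :
    sgn r n hr x = zmod2ToUnits (csumHom r n hr x.left) * Equiv.Perm.sign x.right := by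
  conv_lhs => rw [← SemidirectProduct.inl_left_mul_inr_right x]
  rw [map_mul, sgn, SemidirectProduct.lift_inl, SemidirectProduct.lift_inr]
  rfl

theorem mem_Arn_iff_of_right_eq_one [NeZero r] (hr : 2 ∣ r) {x : G r n} (hx : x.right = 1) :
    x ∈ Arn r n hr ↔ ∑ i, (zval r n x i : ZMod 2) = 0 := by
  have hunits : ∀ s, zmod2ToUnits s = 1 ↔ s = 1 := by decide
  rw [Arn, MonoidHom.mem_ker, sgn_apply, hx, map_one, mul_one, hunits, csumHom,
    MonoidHom.coe_mk, OneHom.coe_mk, ofAdd_eq_one]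
  simp only [ZMod.castHom_apply, ZMod.cast_eq_val, zval]

theorem val_mul_half_eq_zero_or (c : ZMod 2) : c.val * (r / 2) = 0 ∨ c.val * (r / 2) = r / 2 := by
  have hc : c.val < 2 := ZMod.val_lt c
  interval_cases c.val <;> simp

theorem natCast_val_mul_half (hr : r % 4 = 2) (c : ZMod 2) :
    ((c.val * (r / 2) : ℕ) : ZMod 2) = c := by
  rw [Nat.cast_mul, ← ZMod.natCast_mod (r / 2), show r / 2 % 2 = 1 by omega, Nat.cast_one,
    mul_one, ZMod.natCast_zmod_val]

theorem val_natCast_mul_half (hr : r % 4 = 2) {a : ℕ} (ha : a = 0 ∨ a = r / 2) :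
    (a : ZMod 2).val * (r / 2) = a := by
  rcases ha with rfl | rfl
  · simp
  · rw [← ZMod.natCast_mod, show r / 2 % 2 = 1 by omega, Nat.cast_one, ZMod.val_one, one_mul]

def halfTurns (r n : ℕ) (v : Fin n → ZMod 2) : G r n :=
  ⟨fun i => ofAdd (((v i).val * (r / 2) : ℕ) : ZMod r), 1⟩

theorem zval_halfTurns (hr : 0 < r) (v : Fin n → ZMod 2) (i : Fin n) :
    zval r n (halfTurns r n v) i = (v i).val * (r / 2) := by
  refine ZMod.val_cast_of_lt ?_
  have : (v i).val ≤ 1 := Nat.le_of_lt_succ (ZMod.val_lt _)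
  nlinarith [Nat.div_mul_le_self r 2]

theorem halfTurns_injective (hr : r % 4 = 2) : Function.Injective (halfTurns r n) := by
  intro v w h
  funext i
  have := congrArg (fun x => (zval r n x i : ZMod 2)) h
  simpa only [zval_halfTurns (by omega : 0 < r), natCast_val_mul_half hr] using this

theorem mem_ker_pmap_iff (hr : r % 4 = 2) (x : G r n) :
    x ∈ Arn r n (by omega) ∧ pmap r n x = 1 ↔
      x ∈ halfTurns r n '' {v | ∑ i, v i = 0} := by
  have : NeZero r := ⟨by omega⟩
  rw [pmap_eq_one_iff hr]
  constructor
  · rintro ⟨hA, hright, hcolors⟩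
    refine ⟨fun i => (zval r n x i : ZMod 2), (mem_Arn_iff_of_right_eq_one _ hright).mp hA, ?_⟩
    refine SemidirectProduct.ext (funext fun i => ?_) hright.symm
    rw [← ofAdd_zval x i]
    exact congrArg (fun a : ℕ => ofAdd (a : ZMod r)) (val_natCast_mul_half hr (hcolors i))
  · rintro ⟨v, hv, rfl⟩
    have hzval := zval_halfTurns (n := n) (by omega : 0 < r) v
    refine ⟨(mem_Arn_iff_of_right_eq_one _ rfl).mpr ?_, rfl, fun i => ?_⟩
    · simp only [hzval, natCast_val_mul_half hr]
      exact hv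
    · exact hzval i ▸ val_mul_half_eq_zero_or (v i)

end ACP

/-- the kernel of `p : A_{r,n} → G_{r/2,n}` has exactly `2^{n-1}` elements. -/
theorem ker_pmap_card (r n : ℕ) (hn : 1 ≤ n) (hr : r % 4 = 2) :
    Nat.card {x : ACP.G r n // x ∈ ACP.Arn r n (by omega) ∧ ACP.pmap r n x = 1} =
      2 ^ (n - 1) := by
  obtain ⟨m, rfl⟩ : ∃ m, n = m + 1 := ⟨n - 1, by omega⟩
  have hker :
      {x : ACP.G r (m + 1) | x ∈ ACP.Arn r (m + 1) (by omega) ∧ ACP.pmap r (m + 1) x = 1} =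
        ACP.halfTurns r (m + 1) '' {v | ∑ i, v i = 0} :=
    Set.ext (ACP.mem_ker_pmap_iff hr)
  rw [← Set.coe_ofPred, hker, Nat.card_image_of_injective (ACP.halfTurns_injective hr),
    Set.coe_ofPred, Fin.natCard_sum_eq_zero, Nat.card_zmod, Nat.add_sub_cancel]
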